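/- Let α ∈ (0,1), let w = (w_1,w_2,w_3) be a vector of strictly positive weights, and define d_α(U,V) = α·(1 − Corr(U,V)) + (1−α)·d_weu(U,V) for U, V ∈ ℝ³. Then there exists a > 0 such that, with X = (a,0,0), Y = (a,a,0), Z = (0,a,0), the triangle inequality fails: d_α(X,Z) > d_α(X,Y) + d_α(Y,Z). -/

import Mathlib

open scoped BigOperators

/-- Sample Pearson correlation, defined to be 0 when a denominator vanishes. -/
noncomputable def corr {m : ℕ} (U V : Fin m → ℝ) : ℝ :=
  let Ubar := (∑ i, U i) / m
  let Vbar := (∑ i, V i) / m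
  let den := Real.sqrt (∑ i, (U i - Ubar) ^ 2) * Real.sqrt (∑ i, (V i - Vbar) ^ 2)
  if den = 0 then 0 else (∑ i, (U i - Ubar) * (V i - Vbar)) / den

/-- Weighted Euclidean distance with weight vector `w`. -/
noncomputable def dweu {m : ℕ} (w U V : Fin m → ℝ) : ℝ :=
  Real.sqrt (∑ i, w i * (U i - V i) ^ 2)

/-- The interpolated base dissimilarity `d_α`. -/
noncomputable def dAlpha {m : ℕ} (w : Fin m → ℝ) (α : ℝ) (U V : Fin m → ℝ) : ℝ :=
  α * (1 - corr U V) + (1 - α) * dweu w U V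

/-! Correlation is scale invariant and the weighted Euclidean distance is homogeneous, so on
`a • U, a • V, a • W` the correlation part of `d_α` does not depend on `a` while the Euclidean part
is `a` times a constant. As `a → 0` the triangle defect of `d_α` therefore tends to `α` times the
correlation defect `corr U V + corr V W - corr U W - 1`, which is `1/2` for
`U = (1,0,0)`, `V = (1,1,0)`, `W = (0,1,0)`. -/

open Filter Topology

theorem corr_smul_smul {m : ℕ} {a b : ℝ} (ha : 0 < a) (hb : 0 < b) (U V : Fin m → ℝ) :
    corr (a • U) (b • V) = corr U V := by
  simp only [corr, Pi.smul_apply, smul_eq_mul, ← Finset.mul_sum, mul_div_assoc, ← mul_sub,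
    mul_pow, mul_mul_mul_comm, Real.sqrt_mul (sq_nonneg _), Real.sqrt_sq ha.le,
    Real.sqrt_sq hb.le]
  have hab : a * b ≠ 0 := by positivity
  simp only [mul_eq_zero_iff_left hab, ← mul_div_assoc, mul_div_mul_left _ _ hab]

theorem dweu_smul_smul {m : ℕ} (w : Fin m → ℝ) (a : ℝ) (U V : Fin m → ℝ) :
    dweu w (a • U) (a • V) = |a| * dweu w U V := by
  simp only [dweu, Pi.smul_apply, smul_eq_mul, ← mul_sub, mul_pow, mul_left_comm (w _),
    ← Finset.mul_sum, Real.sqrt_mul (sq_nonneg a), Real.sqrt_sq_eq_abs]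

theorem dAlpha_smul_smul {m : ℕ} (w : Fin m → ℝ) (α : ℝ) {a : ℝ} (ha : 0 < a)
    (U V : Fin m → ℝ) :
    dAlpha w α (a • U) (a • V) = α * (1 - corr U V) + (1 - α) * (a * dweu w U V) := by
  rw [dAlpha, corr_smul_smul ha ha, dweu_smul_smul, abs_of_pos ha]

theorem exists_dAlpha_smul_triangle_fails {m : ℕ} (w : Fin m → ℝ) {α : ℝ} (hα : 0 < α)
    {U V W : Fin m → ℝ} (hcorr : corr U W + 1 < corr U V + corr V W) :
    ∃ a : ℝ, 0 < a ∧
      dAlpha w α (a • U) (a • V) + dAlpha w α (a • V) (a • W) < dAlpha w α (a • U) (a • W) := by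
  set defect : ℝ → ℝ := fun a ↦ α * (corr U V + corr V W - corr U W - 1) +
    (1 - α) * (a * (dweu w U W - dweu w U V - dweu w V W)) with defect_def
  have hlim : Tendsto defect (𝓝[>] 0) (𝓝 (defect 0)) :=
    tendsto_nhdsWithin_of_tendsto_nhds (by fun_prop : Continuous defect).continuousAt
  have hdefect₀ : 0 < defect 0 := by
    simp only [defect_def, zero_mul, mul_zero, add_zero]
    exact mul_pos hα (by linarith)
  obtain ⟨a, hdefect, ha⟩ :=
    ((hlim.eventually_const_lt hdefect₀).and self_mem_nhdsWithin).exists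
  refine ⟨a, ha, ?_⟩
  simp only [dAlpha_smul_smul w α ha, defect_def] at hdefect ⊢
  linarith

-- The three correlations are `-1/2`, `1/2` and `1/2`.
theorem corr_square_corners_add_one_lt :
    corr ![1, 0, 0] ![0, 1, 0] + 1 < corr ![1, 0, 0] ![1, 1, 0] + corr ![1, 1, 0] ![0, 1, 0] := by
  norm_num [corr, Fin.sum_univ_three, Matrix.cons_val_two, Matrix.tail_cons, Matrix.head_cons,
    div_mul_div_comm, Real.mul_self_sqrt]

theorem dAlpha_triangle_fails_general (α : ℝ) (hα0 : 0 < α)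
    (w : Fin 3 → ℝ) :
    ∃ a : ℝ, 0 < a ∧
      dAlpha w α ![a, 0, 0] ![0, a, 0] >
        dAlpha w α ![a, 0, 0] ![a, a, 0] + dAlpha w α ![a, a, 0] ![0, a, 0] := by
  obtain ⟨a, ha, htriangle⟩ := exists_dAlpha_smul_triangle_fails w hα0 corr_square_corners_add_one_lt
  refine ⟨a, ha, ?_⟩
  simpa [Matrix.smul_cons] using htriangle

/-- for any `α ∈ (0,1)` and strictly positive weights, there is `a > 0`
for which `d_α` violates the triangle inequality on `X = (a,0,0)`, `Y = (a,a,0)`,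
`Z = (0,a,0)`. -/
theorem dAlpha_triangle_fails (α : ℝ) (hα0 : 0 < α) (hα1 : α < 1)
    (w : Fin 3 → ℝ) (hw : ∀ i, 0 < w i) :
    ∃ a : ℝ, 0 < a ∧
      dAlpha w α ![a, 0, 0] ![0, a, 0] >
        dAlpha w α ![a, 0, 0] ![a, a, 0] + dAlpha w α ![a, a, 0] ![0, a, 0] :=
  dAlpha_triangle_fails_general α hα0 w
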